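/- Let f(u) = (1+u)·log(1+u) − u·log u − (1+u)·log 2. Then for every u with |u − 1| ≤ 1/2, one has |f(u) + (1/4)(u−1)²| ≤ |u−1|³. -/
import Mathlib


noncomputable def f (u : ℝ) : ℝ :=
  (1 + u) * Real.log (1 + u) - u * Real.log u - (1 + u) * Real.log 2

lemma log_quartic {y : ℝ} (h : |y| < 1) :
    |Real.log (1 + y) - (y - y ^ 2 / 2 + y ^ 3 / 3 - y ^ 4 / 4)| ≤ |y| ^ 5 / (1 - |y|) := by
  have h' : |(-y)| < 1 := by rwa [abs_neg]
  have key := Real.abs_log_sub_add_sum_range_le h' 4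
  simp only [Finset.sum_range_succ, Finset.sum_range_zero] at key
  norm_num at key
  refine le_trans (le_of_eq ?_) key
  congr 1
  ring

set_option maxHeartbeats 1000000 in
theorem stmt_2 :
    ∀ u : ℝ, |u - 1| ≤ 1 / 2 →
      |f u + (1 / 4) * (u - 1) ^ 2| ≤ |u - 1| ^ 3 := by
  intro u hu
  obtain ⟨x, rfl⟩ : ∃ x : ℝ, u = 1 + x := ⟨u - 1, by ring⟩
  have hx' : (1 : ℝ) + x - 1 = x := by ring
  rw [hx'] at hu ⊢
  have hxt : x ≤ |x| := le_abs_self x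
  have hxt' : -|x| ≤ x := neg_abs_le x
  have ht0 : 0 ≤ |x| := abs_nonneg x
  have hx1 : |x| < 1 := lt_of_le_of_lt hu (by norm_num)
  have hx2abs : |x / 2| = |x| / 2 := by rw [abs_div, abs_two]
  have hx2 : |x / 2| < 1 := by rw [hx2abs]; linarith
  have hupos : (0 : ℝ) < 1 + x := by linarith
  have h2pos : (0 : ℝ) < 2 + x := by linarith
  -- error bounds from the quartic log expansion
  have hb1 : |Real.log (1 + x) - (x - x ^ 2 / 2 + x ^ 3 / 3 - x ^ 4 / 4)| ≤ 2 * |x| ^ 5 := by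
    refine (log_quartic hx1).trans ?_
    rw [div_le_iff₀ (by linarith)]
    nlinarith [pow_nonneg ht0 5, pow_le_pow_left₀ ht0 hu 5]
  have hb2 : |Real.log (1 + x / 2)
      - (x / 2 - (x / 2) ^ 2 / 2 + (x / 2) ^ 3 / 3 - (x / 2) ^ 4 / 4)| ≤ |x| ^ 5 / 24 := by
    refine (log_quartic hx2).trans ?_
    rw [hx2abs]
    have hnum : (|x| / 2) ^ 5 = |x| ^ 5 / 32 := by ring
    rw [hnum, div_le_div_iff₀ (by linarith) (by norm_num)]
    nlinarith [pow_nonneg ht0 5]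
  obtain ⟨he1l, he1r⟩ := abs_le.mp hb1
  obtain ⟨he2l, he2r⟩ := abs_le.mp hb2
  -- key algebraic identity
  have hlog2x : Real.log (2 + x) = Real.log 2 + Real.log (1 + x / 2) := by
    rw [show (2 : ℝ) + x = 2 * (1 + x / 2) by ring,
      Real.log_mul (by norm_num) (ne_of_gt (by linarith : (0:ℝ) < 1 + x / 2))]
  have hg : f (1 + x) + (1 / 4) * x ^ 2
      = x ^ 3 / 8 - 7 * x ^ 4 / 96 + 15 * x ^ 5 / 64
        + (2 + x) * (Real.log (1 + x / 2)
            - (x / 2 - (x / 2) ^ 2 / 2 + (x / 2) ^ 3 / 3 - (x / 2) ^ 4 / 4))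
        - (1 + x) * (Real.log (1 + x) - (x - x ^ 2 / 2 + x ^ 3 / 3 - x ^ 4 / 4)) := by
    rw [f, show (1 : ℝ) + (1 + x) = 2 + x by ring, hlog2x]
    ring
  obtain ⟨E1, hE1⟩ : ∃ E1 : ℝ,
      Real.log (1 + x) - (x - x ^ 2 / 2 + x ^ 3 / 3 - x ^ 4 / 4) = E1 := ⟨_, rfl⟩
  obtain ⟨E2, hE2⟩ : ∃ E2 : ℝ, Real.log (1 + x / 2)
      - (x / 2 - (x / 2) ^ 2 / 2 + (x / 2) ^ 3 / 3 - (x / 2) ^ 4 / 4) = E2 := ⟨_, rfl⟩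
  rw [hE1] at he1l he1r
  rw [hE2] at he2l he2r
  rw [hE1, hE2] at hg
  rw [hg, abs_le]
  have hx3u : x ^ 3 ≤ |x| ^ 3 := by
    calc x ^ 3 ≤ |x ^ 3| := le_abs_self _
    _ = |x| ^ 3 := abs_pow x 3
  have hx3l : -|x| ^ 3 ≤ x ^ 3 := by
    have h' := neg_abs_le (x ^ 3); rwa [abs_pow] at h'
  have hx5u : x ^ 5 ≤ |x| ^ 5 := by
    calc x ^ 5 ≤ |x ^ 5| := le_abs_self _
    _ = |x| ^ 5 := abs_pow x 5
  have hx5l : -|x| ^ 5 ≤ x ^ 5 := by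
    have h' := neg_abs_le (x ^ 5); rwa [abs_pow] at h'
  have hx4 : x ^ 4 = |x| ^ 4 := by
    rw [← abs_pow, abs_of_nonneg (by positivity)]
  have ht4 : |x| ^ 4 ≤ |x| ^ 3 / 2 := by nlinarith [pow_nonneg ht0 3]
  have ht5 : |x| ^ 5 ≤ |x| ^ 3 / 4 := by nlinarith [pow_nonneg ht0 3, pow_nonneg ht0 4]
  have hB2 : (0 : ℝ) ≤ |x| ^ 5 / 24 := by positivity
  have hB1 : (0 : ℝ) ≤ 2 * |x| ^ 5 := by positivity
  have hnn : (0:ℝ) ≤ 1 / 2 - x := by linarith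
  have hex2 : (2 + x) * (|x| ^ 5 / 24) = 5 / 2 * (|x| ^ 5 / 24) - (1 / 2 - x) * (|x| ^ 5 / 24) := by
    ring
  have hex2' : (2 + x) * (-(|x| ^ 5 / 24))
      = -(5 / 2 * (|x| ^ 5 / 24)) + (1 / 2 - x) * (|x| ^ 5 / 24) := by ring
  have hex1 : (1 + x) * (2 * |x| ^ 5) = 3 / 2 * (2 * |x| ^ 5) - (1 / 2 - x) * (2 * |x| ^ 5) := by
    ring
  have hex1' : (1 + x) * (-(2 * |x| ^ 5))
      = -(3 / 2 * (2 * |x| ^ 5)) + (1 / 2 - x) * (2 * |x| ^ 5) := by ring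
  have hc2u : (2 + x) * E2 ≤ 5 / 2 * (|x| ^ 5 / 24) := by
    linarith [mul_le_mul_of_nonneg_left he2r h2pos.le, mul_nonneg hnn hB2, hex2]
  have hc2l : -(5 / 2 * (|x| ^ 5 / 24)) ≤ (2 + x) * E2 := by
    linarith [mul_le_mul_of_nonneg_left he2l h2pos.le, mul_nonneg hnn hB2, hex2']
  have hc1u : (1 + x) * E1 ≤ 3 / 2 * (2 * |x| ^ 5) := by
    linarith [mul_le_mul_of_nonneg_left he1r hupos.le, mul_nonneg hnn hB1, hex1]
  have hc1l : -(3 / 2 * (2 * |x| ^ 5)) ≤ (1 + x) * E1 := by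
    linarith [mul_le_mul_of_nonneg_left he1l hupos.le, mul_nonneg hnn hB1, hex1']
  have ht3nn : (0:ℝ) ≤ |x| ^ 3 := by positivity
  have ht4nn : (0:ℝ) ≤ |x| ^ 4 := by positivity
  rw [hx4] at *
  constructor <;> linarith
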